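/- arXiv:2310.02142 — 3 statements merged into one kernel-verified Lean document; each statement's English description precedes it below -/
import Mathlib

section
/- Let G = (A, SPath^T_w) be a two-player zero-sum shortest-path game on a possibly infinite arena A with target T ⊆ V and weight function w : E → ℕ. Then G is determined: for every vertex v, inf over strategies σ_1 of player 1 of sup over strategies σ_2 of player 2 of SPath^T_w(out((σ_1, σ_2), v)) equals sup over σ_2 of inf over σ_1 of the same quantity, and this common value val(v) lies in ℕ ∪ {+∞}. -/
open scoped ENNReal Classical

/-- An `n`-player arena on a (possibly infinite) directed graph: an edge relation
with no deadlocks, together with an assignment of each vertex to its owner. -/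
structure Arena (V : Type) (n : ℕ) where
  E : V → V → Prop
  owner : V → Fin n
  no_deadlock : ∀ v, ∃ v', E v v'

namespace Arena

variable {V : Type} {n : ℕ}

/-- A play: an infinite sequence of vertices following edges. -/
def IsPlay (A : Arena V n) (π : ℕ → V) : Prop := ∀ j, A.E (π j) (π (j + 1))

/-- A strategy: given the past history (the earlier vertices, oldest first) and the
current vertex, pick an `E`-successor of the current vertex. -/
structure Strategy (A : Arena V n) where
  next : List V → V → V
  valid : ∀ h v, A.E v (next h v)

/-- The list of the first `j` vertices of a play. -/
def pref (π : ℕ → V) (j : ℕ) : List V := (List.range j).map π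

/-- A play is consistent with the strategy `σ` used by player `i`. -/
def Consistent (A : Arena V n) (i : Fin n) (σ : A.Strategy) (π : ℕ → V) : Prop :=
  ∀ j, A.owner (π j) = i → π (j + 1) = σ.next (pref π j) (π j)

/-- A memoryless strategy only depends on the current vertex. -/
def Memoryless {A : Arena V n} (σ : A.Strategy) : Prop :=
  ∀ h h' v, σ.next h v = σ.next h' v

def outcomeAux (A : Arena V n) (σ : Fin n → A.Strategy) (v0 : V) : ℕ → List V × V
  | 0 => ([], v0)
  | j + 1 =>
      let p := outcomeAux A σ v0 j
      (p.1 ++ [p.2], (σ (A.owner p.2)).next p.1 p.2)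

/-- The outcome of the strategy profile `σ` from `v0`: the unique play from `v0`
consistent with every strategy of the profile. -/
def outcome (A : Arena V n) (σ : Fin n → A.Strategy) (v0 : V) (j : ℕ) : V :=
  (outcomeAux A σ v0 j).2

/-- Reachability objective: visit `T`. -/
def ReachObj (T : Set V) : Set (ℕ → V) := {π | ∃ j, π j ∈ T}

/-- Safety objective: never visit `T`. -/
def SafeObj (T : Set V) : Set (ℕ → V) := {π | ∀ j, π j ∉ T}

/-- Büchi objective: visit `T` infinitely often. -/
def BuchiObj (T : Set V) : Set (ℕ → V) := {π | ∀ j, ∃ k, j ≤ k ∧ π k ∈ T}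

/-- co-Büchi objective: visit `T` only finitely often. -/
def CoBuchiObj (T : Set V) : Set (ℕ → V) := {π | ∃ j, ∀ k, j ≤ k → π k ∉ T}

/-- Shortest-path cost of a play: the total weight up to the first visit of `T`,
and `⊤` if `T` is never visited. -/
noncomputable def spCost (w : V → V → ℕ) (T : Set V) (π : ℕ → V) : ℝ≥0∞ :=
  if ∃ k, π k ∈ T then
    (Finset.range (sInf {k | π k ∈ T})).sum fun j => (w (π j) (π (j + 1)) : ℝ≥0∞)
  else ⊤

/-- Winning region of player `p` (whose objective is `Ω`) in a two-player game:
vertices from which `p` has a strategy all of whose consistent plays lie in `Ω`. -/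
def WinRegion (A : Arena V 2) (p : Fin 2) (Ω : Set (ℕ → V)) : Set V :=
  {v | ∃ σ : A.Strategy, ∀ π, A.IsPlay π → π 0 = v → A.Consistent p σ π → π ∈ Ω}

/-- Lower value `inf_{σ₁} sup_{σ₂}` of a two-player zero-sum game with cost `c`
(minimised by player 1, maximised by player 2). -/
noncomputable def valIS (A : Arena V 2) (c : (ℕ → V) → ℝ≥0∞) (v : V) : ℝ≥0∞ :=
  ⨅ σ1 : A.Strategy, ⨆ σ2 : A.Strategy, c (outcome A ![σ1, σ2] v)

/-- Upper value `sup_{σ₂} inf_{σ₁}`. -/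
noncomputable def valSI (A : Arena V 2) (c : (ℕ → V) → ℝ≥0∞) (v : V) : ℝ≥0∞ :=
  ⨆ σ2 : A.Strategy, ⨅ σ1 : A.Strategy, c (outcome A ![σ1, σ2] v)

/-- Nash equilibrium from `v0` for cost functions (each player minimises):
no unilateral deviation decreases the deviator's cost. -/
def IsNECost (A : Arena V n) (cost : Fin n → (ℕ → V) → ℝ≥0∞)
    (σ : Fin n → A.Strategy) (v0 : V) : Prop :=
  ∀ (i : Fin n) (τ : A.Strategy),
    cost i (outcome A σ v0) ≤ cost i (outcome A (Function.update σ i τ) v0)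

/-- Nash equilibrium from `v0` for objectives: if a unilateral deviation of player `i`
satisfies `Ω i`, then so does the equilibrium outcome. -/
def IsNEObj (A : Arena V n) (Ω : Fin n → Set (ℕ → V))
    (σ : Fin n → A.Strategy) (v0 : V) : Prop :=
  ∀ (i : Fin n) (τ : A.Strategy),
    outcome A (Function.update σ i τ) v0 ∈ Ω i → outcome A σ v0 ∈ Ω i

/-- The coalition arena of player `i`: player `i` (as player `0`) against all others. -/
def coalition (A : Arena V n) (i : Fin n) : Arena V 2 where
  E := A.E
  owner := fun v => if A.owner v = i then 0 else 1
  no_deadlock := A.no_deadlock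

/-- Winning region of player `i` in their coalition game for objective `Ω`. -/
def coalWin (A : Arena V n) (i : Fin n) (Ω : Set (ℕ → V)) : Set V :=
  WinRegion (coalition A i) 0 Ω

/-- Value of a vertex in player `i`'s coalition game with cost `c`. -/
noncomputable def coalVal (A : Arena V n) (i : Fin n) (c : (ℕ → V) → ℝ≥0∞) (v : V) :
    ℝ≥0∞ :=
  valIS (coalition A i) c v

/-- Players whose reachability objective is satisfied by `π`. -/
def satReach (T : Fin n → Set V) (π : ℕ → V) : Set (Fin n) := {i | ∃ j, π j ∈ T i}

/-- Players whose safety objective is satisfied by `π`. -/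
def satSafe (T : Fin n → Set V) (π : ℕ → V) : Set (Fin n) := {i | ∀ j, π j ∉ T i}

/-- Players whose Büchi objective is satisfied by `π`. -/
def satBuchi (T : Fin n → Set V) (π : ℕ → V) : Set (Fin n) :=
  {i | ∀ j, ∃ k, j ≤ k ∧ π k ∈ T i}

/-- Players whose co-Büchi objective is satisfied by `π`. -/
def satCoBuchi (T : Fin n → Set V) (π : ℕ → V) : Set (Fin n) :=
  {i | ∃ j, ∀ k, j ≤ k → π k ∉ T i}

/-- Earliest positions at which the targets visited by `π` are first visited. -/
def visitSet (T : Fin n → Set V) (π : ℕ → V) : Set ℕ :=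
  {m | ∃ i, (∃ j, π j ∈ T i) ∧ m = sInf {j | π j ∈ T i}}

/-- A Mealy machine with memory states `M`. -/
structure Mealy (A : Arena V n) (M : Type) where
  init : M
  up : M → V → M
  nxt : M → V → V
  valid : ∀ m v, A.E v (nxt m v)

/-- The strategy `σ` is induced by the Mealy machine `mm`. -/
def InducedBy {A : Arena V n} {M : Type} (σ : A.Strategy) (mm : Mealy A M) : Prop :=
  ∀ h v, σ.next h v = mm.nxt (h.foldl mm.up mm.init) v

/-- `σ` has memory size at most `b`. -/
def HasMemorySize {A : Arena V n} (σ : A.Strategy) (b : ℕ) : Prop :=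
  ∃ (M : Type) (mm : Mealy A M), Finite M ∧ Nat.card M ≤ b ∧ InducedBy σ mm

/-- `σ` is a finite-memory strategy. -/
def FiniteMemory {A : Arena V n} (σ : A.Strategy) : Prop :=
  ∃ (M : Type) (mm : Mealy A M), Finite M ∧ InducedBy σ mm

/-- The (finite) segment of `π` between positions `a` and `b` is a simple history. -/
def SimpleSeg (π : ℕ → V) (a b : ℕ) : Prop :=
  ∀ m m', a ≤ m → m ≤ b → a ≤ m' → m' ≤ b → π m = π m' → m = m'

/-- The suffix of `π` from position `a` is a simple play. -/
def SimplePlaySeg (π : ℕ → V) (a : ℕ) : Prop :=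
  ∀ m m', a ≤ m → a ≤ m' → π m = π m' → m = m'

/-- The suffix of `π` from position `a` is a simple lasso `p c^ω` with `p c`
a simple history. -/
def SimpleLassoSeg (π : ℕ → V) (a : ℕ) : Prop :=
  ∃ k ℓ, 0 < ℓ ∧ (∀ m, a + k ≤ m → π (m + ℓ) = π m) ∧
    ∀ m m', a ≤ m → m < a + k + ℓ → a ≤ m' → m' < a + k + ℓ → π m = π m' → m = m'

/-- The segment of `π` between positions `a` and `b` is a simple cycle. -/
def SimpleCycleSeg (π : ℕ → V) (a b : ℕ) : Prop :=
  a < b ∧ π b = π a ∧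
    ∀ m m', a ≤ m → m < b → a ≤ m' → m' < b → π m = π m' → m = m'

/-- Total weight of a history (a list of vertices). -/
def histWeight (w : V → V → ℕ) : List V → ℕ
  | [] => 0
  | [_] => 0
  | a :: b :: t => w a b + histWeight w (b :: t)

/-- The list of vertices along positions `a..b` (inclusive) of a play. -/
def segList (π : ℕ → V) (a b : ℕ) : List V :=
  (List.range (b - a + 1)).map fun m => π (a + m)

/-- The segment of `π` between positions `a` and `b` has minimal weight among all
histories that share its first and last vertex and traverse only its vertices. -/
def MinWeightSeg (A : Arena V n) (w : V → V → ℕ) (π : ℕ → V) (a b : ℕ) : Prop :=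
  ∀ h : List V, h ≠ [] → List.Chain' A.E h →
    h.head? = some (π a) → h.getLast? = some (π b) →
    (∀ x ∈ h, ∃ m, a ≤ m ∧ m ≤ b ∧ π m = x) →
    histWeight w (segList π a b) ≤ histWeight w h

/-- Given cut positions `p`, segments number `l` and `l'` of `π` carry the same
vertex sequence. -/
def SegEq (π : ℕ → V) (p : ℕ → ℕ) (l l' : ℕ) : Prop :=
  p (l' + 1) - p l' = p (l + 1) - p l ∧
    ∀ m, m ≤ p (l + 1) - p l → π (p l' + m) = π (p l + m)

/-- There is no cycle of the arena using only vertices of `S` and avoiding `avoid`. -/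
def NoCycleAvoid (A : Arena V n) (S : Set V) (avoid : V) : Prop :=
  ¬ ∃ (m : ℕ) (c : ℕ → V), 0 < m ∧ (∀ j, j < m → A.E (c j) (c (j + 1))) ∧
      c m = c 0 ∧ ∀ j, j ≤ m → c j ∈ S ∧ c j ≠ avoid

end Arena

open Arena

namespace SPDet
open Arena

variable {V : Type}

def spent (w : V → V → ℕ) (π : ℕ → V) (j : ℕ) : ℕ :=
  ∑ i ∈ Finset.range j, w (π i) (π (i + 1))

lemma spent_zero (w : V → V → ℕ) (π : ℕ → V) : spent w π 0 = 0 := by simp [spent]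

lemma spent_succ (w : V → V → ℕ) (π : ℕ → V) (j : ℕ) :
    spent w π (j + 1) = spent w π j + w (π j) (π (j + 1)) :=
  Finset.sum_range_succ _ _

lemma spent_mono (w : V → V → ℕ) (π : ℕ → V) {j k : ℕ} (h : j ≤ k) :
    spent w π j ≤ spent w π k :=
  Finset.sum_le_sum_of_subset (Finset.range_subset_range.2 h)

lemma pref_succ (π : ℕ → V) (j : ℕ) : pref π (j + 1) = pref π j ++ [π j] := by
  simp [pref, List.range_succ]

lemma pref_shift (f : ℕ → V) (j : ℕ) :
    pref f (j + 1) = f 0 :: pref (fun i => f (i + 1)) j := by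
  simp [pref, List.range_succ_eq_map, List.map_map]

lemma histWeight_pref (w : V → V → ℕ) :
    ∀ (j : ℕ) (π : ℕ → V), histWeight w (pref π (j + 1)) = spent w π j := by
  intro j
  induction j with
  | zero =>
    intro π
    simp [pref, spent_zero, histWeight]
  | succ j ih =>
    intro π
    have h1 : pref π (j + 2) = π 0 :: (π 1 :: pref (fun i => π (i + 2)) j) := by
      rw [pref_shift, pref_shift]
    have h2 : pref (fun i => π (i + 1)) (j + 1) = π 1 :: pref (fun i => π (i + 2)) j := by
      rw [pref_shift]
    rw [h1, histWeight, ← h2, ih (fun i => π (i + 1))]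
    simp only [spent, Finset.sum_range_succ', zero_add]
    omega

/-! ### Outcome lemmas -/

variable {n : ℕ}

lemma outcomeAux_fst (A : Arena V n) (σ : Fin n → A.Strategy) (v0 : V) :
    ∀ j, (outcomeAux A σ v0 j).1 = pref (outcome A σ v0) j := by
  intro j
  induction j with
  | zero => simp [outcomeAux, pref]
  | succ j ih =>
    show (outcomeAux A σ v0 j).1 ++ [(outcomeAux A σ v0 j).2] = _
    rw [ih, pref_succ]
    rfl

lemma outcome_zero (A : Arena V n) (σ : Fin n → A.Strategy) (v0 : V) :
    outcome A σ v0 0 = v0 := rfl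

lemma outcome_succ (A : Arena V n) (σ : Fin n → A.Strategy) (v0 : V) (j : ℕ) :
    outcome A σ v0 (j + 1) =
      (σ (A.owner (outcome A σ v0 j))).next (pref (outcome A σ v0) j) (outcome A σ v0 j) := by
  show (outcomeAux A σ v0 (j+1)).2 = _
  rw [outcomeAux]
  dsimp only
  rw [outcomeAux_fst]
  rfl

lemma outcome_isPlay (A : Arena V n) (σ : Fin n → A.Strategy) (v0 : V) :
    A.IsPlay (outcome A σ v0) := by
  intro j
  rw [outcome_succ]
  exact ((σ _)).valid _ _

lemma outcome_consistent (A : Arena V n) (σ : Fin n → A.Strategy) (v0 : V) (i : Fin n) :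
    A.Consistent i (σ i) (outcome A σ v0) := by
  intro j h
  rw [outcome_succ, h]

/-! ### Budgeted reachability game: ordinal approximants -/

noncomputable def WinA (A : Arena V 2) (T : Set V) (w : V → V → ℕ) (α : Ordinal.{0})
    (v : V) (s : ℕ) : Prop :=
  v ∈ T ∨
    ((A.owner v = 0 ∧ ∃ c, A.E v c ∧ w v c ≤ s ∧
        ∃ β, ∃ _ : β < α, WinA A T w β c (s - w v c)) ∨
     (A.owner v = 1 ∧ ∀ c, A.E v c → w v c ≤ s ∧
        ∃ β, ∃ _ : β < α, WinA A T w β c (s - w v c)))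
termination_by α

def Win (A : Arena V 2) (T : Set V) (w : V → V → ℕ) (v : V) (s : ℕ) : Prop :=
  ∃ α : Ordinal.{0}, WinA A T w α v s

noncomputable def rank (A : Arena V 2) (T : Set V) (w : V → V → ℕ) (v : V) (s : ℕ) :
    Ordinal.{0} :=
  sInf {α | WinA A T w α v s}

lemma winA_rank {A : Arena V 2} {T : Set V} {w : V → V → ℕ} {v : V} {s : ℕ}
    (h : Win A T w v s) : WinA A T w (rank A T w v s) v s :=
  csInf_mem h

lemma rank_le {A : Arena V 2} {T : Set V} {w : V → V → ℕ} {v : V} {s : ℕ} {α : Ordinal.{0}}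
    (h : WinA A T w α v s) : rank A T w v s ≤ α :=
  csInf_le' h

lemma winA_mono {A : Arena V 2} {T : Set V} {w : V → V → ℕ} {v : V} {s : ℕ}
    {α β : Ordinal.{0}} (hab : α ≤ β) (h : WinA A T w α v s) : WinA A T w β v s := by
  rw [WinA] at h ⊢
  rcases h with h | ⟨h0, c, hE, hw, γ, hγ, hWc⟩ | ⟨h1, hall⟩
  · exact Or.inl h
  · exact Or.inr (Or.inl ⟨h0, c, hE, hw, γ, lt_of_lt_of_le hγ hab, hWc⟩)
  · refine Or.inr (Or.inr ⟨h1, fun c hc => ?_⟩)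
    obtain ⟨hw, γ, hγ, hWc⟩ := hall c hc
    exact ⟨hw, γ, lt_of_lt_of_le hγ hab, hWc⟩

lemma win_target {A : Arena V 2} {T : Set V} {w : V → V → ℕ} {v : V} (s : ℕ)
    (h : v ∈ T) : Win A T w v s :=
  ⟨0, by rw [WinA]; exact Or.inl h⟩

lemma win_p0 {A : Arena V 2} {T : Set V} {w : V → V → ℕ} {v c : V} {s : ℕ}
    (h0 : A.owner v = 0) (hE : A.E v c) (hw : w v c ≤ s)
    (h : Win A T w c (s - w v c)) : Win A T w v s := by
  obtain ⟨α, hα⟩ := h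
  refine ⟨α + 1, ?_⟩
  rw [WinA]
  exact Or.inr (Or.inl ⟨h0, c, hE, hw, α, lt_add_one α, hα⟩)

lemma win_p1 {A : Arena V 2} {T : Set V} {w : V → V → ℕ} {v : V} {s : ℕ}
    (h1 : A.owner v = 1)
    (h : ∀ c, A.E v c → w v c ≤ s ∧ Win A T w c (s - w v c)) : Win A T w v s := by
  classical
  set g : {c // A.E v c} → Ordinal.{0} := fun c => rank A T w c.1 (s - w v c.1) with hg
  refine ⟨(⨆ c, g c) + 1, ?_⟩
  rw [WinA]
  refine Or.inr (Or.inr ⟨h1, fun c hc => ⟨(h c hc).1, g ⟨c, hc⟩, ?_, winA_rank (h c hc).2⟩⟩)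
  exact lt_of_le_of_lt (le_ciSup (Ordinal.bddAbove_range g) ⟨c, hc⟩) (lt_add_one _)

lemma notWin_p0 {A : Arena V 2} {T : Set V} {w : V → V → ℕ} {v c : V} {s : ℕ}
    (h : ¬ Win A T w v s) (h0 : A.owner v = 0) (hE : A.E v c) (hw : w v c ≤ s) :
    ¬ Win A T w c (s - w v c) :=
  fun hc => h (win_p0 h0 hE hw hc)

lemma notWin_p1 {A : Arena V 2} {T : Set V} {w : V → V → ℕ} {v : V} {s : ℕ}
    (h : ¬ Win A T w v s) (h1 : A.owner v = 1) :
    ∃ c, A.E v c ∧ (s < w v c ∨ ¬ Win A T w c (s - w v c)) := by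
  by_contra hn
  push_neg at hn
  exact h (win_p1 h1 fun c hc => ⟨by have := (hn c hc).1; omega, (hn c hc).2⟩)

/-! ### The two strategies -/

noncomputable def str1 (A : Arena V 2) (T : Set V) (w : V → V → ℕ) (b : ℕ) :
    A.Strategy where
  next h u :=
    if H : ∃ c, A.E u c ∧ w u c ≤ b - histWeight w (h ++ [u]) ∧
        ∃ β, β < rank A T w u (b - histWeight w (h ++ [u])) ∧
          WinA A T w β c (b - histWeight w (h ++ [u]) - w u c)
    then H.choose else (A.no_deadlock u).choose
  valid h u := by
    split_ifs with H
    · exact H.choose_spec.1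
    · exact (A.no_deadlock u).choose_spec

noncomputable def str2 (A : Arena V 2) (T : Set V) (w : V → V → ℕ) (b : ℕ) :
    A.Strategy where
  next h u :=
    if H : ∃ c, A.E u c ∧ (b - histWeight w (h ++ [u]) < w u c ∨
        ¬ Win A T w c (b - histWeight w (h ++ [u]) - w u c))
    then H.choose else (A.no_deadlock u).choose
  valid h u := by
    split_ifs with H
    · exact H.choose_spec.1
    · exact (A.no_deadlock u).choose_spec

/-! ### Player 1 forces reaching `T` within budget -/

lemma reach (A : Arena V 2) (T : Set V) (w : V → V → ℕ) (b : ℕ) (π : ℕ → V)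
    (hp : A.IsPlay π) (hc : A.Consistent 0 (str1 A T w b) π) :
    ∀ (α : Ordinal.{0}) (j s : ℕ), WinA A T w α (π j) s → s + spent w π j = b →
      ∃ k, j ≤ k ∧ π k ∈ T ∧ spent w π k ≤ b := by
  intro α
  induction α using Ordinal.induction with
  | h α ih =>
  intro j s hW hb
  by_cases hT : π j ∈ T
  · exact ⟨j, le_refl _, hT, by omega⟩
  have hwin : Win A T w (π j) s := ⟨α, hW⟩
  have hrle : rank A T w (π j) s ≤ α := rank_le hW
  have hr := winA_rank hwin
  rw [WinA] at hr
  rcases hr with h | ⟨h0, c, hE, hwc, β, hβ, hWc⟩ | ⟨h1, hall⟩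
  · exact absurd h hT
  · -- player 1's vertex
    have hbud : b - histWeight w (pref π j ++ [π j]) = s := by
      rw [← pref_succ, histWeight_pref]; omega
    have H : ∃ c', A.E (π j) c' ∧
        w (π j) c' ≤ b - histWeight w (pref π j ++ [π j]) ∧
        ∃ β', β' < rank A T w (π j) (b - histWeight w (pref π j ++ [π j])) ∧
          WinA A T w β' c' (b - histWeight w (pref π j ++ [π j]) - w (π j) c') := by
      rw [hbud]; exact ⟨c, hE, hwc, β, hβ, hWc⟩
    have hstep : π (j + 1) = H.choose := by
      rw [hc j h0]
      show dite _ _ _ = _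
      rw [dif_pos H]
    obtain ⟨hE', hw', β', hβ', hW'⟩ := H.choose_spec
    rw [← hstep] at hE' hw' hW'
    rw [hbud] at hw' hβ' hW'
    have hβα : β' < α := lt_of_lt_of_le hβ' hrle
    refine (ih β' hβα (j + 1) (s - w (π j) (π (j+1))) hW' ?_).imp
      fun k hk => ⟨by omega, hk.2.1, hk.2.2⟩
    rw [spent_succ]
    omega
  · -- player 2's vertex
    obtain ⟨hwle, β, hβ, hWc⟩ := hall (π (j + 1)) (hp j)
    refine (ih β (lt_of_lt_of_le hβ hrle) (j + 1) (s - w (π j) (π (j+1))) hWc ?_).imp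
      fun k hk => ⟨by omega, hk.2.1, hk.2.2⟩
    rw [spent_succ]
    omega

lemma fin2_cases (i : Fin 2) : i = 0 ∨ i = 1 := by
  fin_cases i
  · exact Or.inl rfl
  · exact Or.inr rfl

/-! ### Player 2 forces avoiding `T` within budget -/

lemma avoidInv (A : Arena V 2) (T : Set V) (w : V → V → ℕ) (b : ℕ) (π : ℕ → V)
    (hp : A.IsPlay π) (hc : A.Consistent 1 (str2 A T w b) π)
    (h0 : ¬ Win A T w (π 0) b) :
    ∀ j, spent w π j ≤ b → ¬ Win A T w (π j) (b - spent w π j) := by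
  intro j
  induction j with
  | zero => intro _; simpa [spent_zero] using h0
  | succ j ih =>
    intro hs1
    rw [spent_succ] at hs1
    have hsj : spent w π j ≤ b := by omega
    have hnw := ih hsj
    have hwle : w (π j) (π (j + 1)) ≤ b - spent w π j := by omega
    have harith : b - spent w π (j + 1) =
        (b - spent w π j) - w (π j) (π (j + 1)) := by rw [spent_succ]; omega
    rw [harith]
    rcases fin2_cases (A.owner (π j)) with hown | hown
    · exact notWin_p0 hnw hown (hp j) hwle
    · -- player 2 moves
      have hbud : b - histWeight w (pref π j ++ [π j]) = b - spent w π j := by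
        rw [← pref_succ, histWeight_pref]
      have H : ∃ c, A.E (π j) c ∧
          (b - histWeight w (pref π j ++ [π j]) < w (π j) c ∨
            ¬ Win A T w c (b - histWeight w (pref π j ++ [π j]) - w (π j) c)) := by
        rw [hbud]; exact notWin_p1 hnw hown
      have hstep : π (j + 1) = H.choose := by
        rw [hc j hown]
        show dite _ _ _ = _
        rw [dif_pos H]
      obtain ⟨hE', hd⟩ := H.choose_spec
      rw [← hstep] at hE' hd
      rw [hbud] at hd
      rcases hd with hd | hd
      · exfalso; omega
      · exact hd

/-! ### The two value bounds -/

lemma claim1 (A : Arena V 2) (T : Set V) (w : V → V → ℕ) {v : V} {b : ℕ}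
    (hWin : Win A T w v b) (σ2 : A.Strategy) :
    spCost w T (outcome A ![str1 A T w b, σ2] v) ≤ (b : ℝ≥0∞) := by
  set π := outcome A ![str1 A T w b, σ2] v with hπ
  have hp := outcome_isPlay A ![str1 A T w b, σ2] v
  have hcons : A.Consistent 0 (str1 A T w b) π := by
    have h := outcome_consistent A ![str1 A T w b, σ2] v 0
    simpa using h
  obtain ⟨α, hα⟩ := hWin
  have hπ0 : π 0 = v := rfl
  obtain ⟨k, -, hkT, hkb⟩ := reach A T w b π hp hcons α 0 b (by rw [hπ0]; exact hα)
      (by simp [spent_zero])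
  have hex : ∃ k, π k ∈ T := ⟨k, hkT⟩
  rw [spCost, if_pos hex]
  have hK : sInf {k | π k ∈ T} ≤ k := Nat.sInf_le hkT
  have hsum : (∑ j ∈ Finset.range (sInf {k | π k ∈ T}), (w (π j) (π (j+1)) : ℝ≥0∞))
      = ((spent w π (sInf {k | π k ∈ T}) : ℕ) : ℝ≥0∞) := by
    rw [spent]; push_cast; rfl
  rw [hsum]
  exact_mod_cast le_trans (spent_mono w π hK) hkb

lemma claim2 (A : Arena V 2) (T : Set V) (w : V → V → ℕ) {v : V} {b : ℕ}
    (hN : ¬ Win A T w v b) (σ1 : A.Strategy) :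
    ((b + 1 : ℕ) : ℝ≥0∞) ≤ spCost w T (outcome A ![σ1, str2 A T w b] v) := by
  set π := outcome A ![σ1, str2 A T w b] v with hπ
  have hp := outcome_isPlay A ![σ1, str2 A T w b] v
  have hcons : A.Consistent 1 (str2 A T w b) π := by
    have h := outcome_consistent A ![σ1, str2 A T w b] v 1
    simpa using h
  have hinv := avoidInv A T w b π hp hcons hN
  rw [spCost]
  split_ifs with hex
  · have hKT : π (sInf {k | π k ∈ T}) ∈ T := Nat.sInf_mem hex
    have hb : ¬ spent w π (sInf {k | π k ∈ T}) ≤ b :=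
      fun hle => hinv _ hle (win_target _ hKT)
    have hsum : (∑ j ∈ Finset.range (sInf {k | π k ∈ T}), (w (π j) (π (j+1)) : ℝ≥0∞))
        = ((spent w π (sInf {k | π k ∈ T}) : ℕ) : ℝ≥0∞) := by
      rw [spent]; push_cast; rfl
    rw [hsum]
    exact_mod_cast by omega
  · exact le_top

lemma valSI_le_valIS (A : Arena V 2) (c : (ℕ → V) → ℝ≥0∞) (v : V) :
    valSI A c v ≤ valIS A c v := by
  rw [valSI, valIS]
  exact iSup_le fun σ2 => le_iInf fun σ1 =>
    le_trans (iInf_le _ σ1) (le_iSup (fun σ2' => c (outcome A ![σ1, σ2'] v)) σ2)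

end SPDet

/-- A two-player zero-sum shortest-path game is determined, and
the value of every vertex lies in `ℕ ∪ {+∞}`. -/
theorem zeroSum_spath_determined
    (V : Type) (A : Arena V 2) (T : Set V) (w : V → V → ℕ) (v : V) :
    valIS A (spCost w T) v = valSI A (spCost w T) v ∧
      ((∃ k : ℕ, valIS A (spCost w T) v = (k : ℝ≥0∞)) ∨
        valIS A (spCost w T) v = ⊤) := by
  classical
  have hle := SPDet.valSI_le_valIS A (spCost w T) v
  by_cases hne : ∃ s : ℕ, SPDet.Win A T w v s
  · set m := sInf {s | SPDet.Win A T w v s} with hm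
    have hmW : SPDet.Win A T w v m := Nat.sInf_mem hne
    have h1 : valIS A (spCost w T) v ≤ (m : ℝ≥0∞) :=
      le_trans (iInf_le _ (SPDet.str1 A T w m))
        (iSup_le fun σ2 => SPDet.claim1 A T w hmW σ2)
    have h2 : (m : ℝ≥0∞) ≤ valSI A (spCost w T) v := by
      rcases Nat.eq_zero_or_pos m with h0 | hpos
      · rw [h0]; simp
      · have hnw : ¬ SPDet.Win A T w v (m - 1) := by
          intro hw
          have hcon : m ≤ m - 1 := Nat.sInf_le hw
          omega
        have hm1 : ((m - 1 + 1 : ℕ) : ℝ≥0∞) = (m : ℝ≥0∞) := by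
          rw [Nat.sub_add_cancel hpos]
        calc (m : ℝ≥0∞) = ((m - 1 + 1 : ℕ) : ℝ≥0∞) := hm1.symm
          _ ≤ ⨅ σ1 : A.Strategy,
              spCost w T (outcome A ![σ1, SPDet.str2 A T w (m-1)] v) :=
            le_iInf fun σ1 => SPDet.claim2 A T w hnw σ1
          _ ≤ valSI A (spCost w T) v :=
            le_iSup (fun σ2 => ⨅ σ1 : A.Strategy,
              spCost w T (outcome A ![σ1, σ2] v)) (SPDet.str2 A T w (m-1))
    refine ⟨le_antisymm (le_trans h1 h2) hle, Or.inl ⟨m, le_antisymm h1 (le_trans h2 hle)⟩⟩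
  · push_neg at hne
    have htop : valSI A (spCost w T) v = ⊤ := by
      by_contra hne'
      obtain ⟨k, hk⟩ := ENNReal.exists_nat_gt hne'
      have h2 : ((k + 1 : ℕ) : ℝ≥0∞) ≤ valSI A (spCost w T) v :=
        calc ((k + 1 : ℕ) : ℝ≥0∞)
            ≤ ⨅ σ1 : A.Strategy,
              spCost w T (outcome A ![σ1, SPDet.str2 A T w k] v) :=
            le_iInf fun σ1 => SPDet.claim2 A T w (hne k) σ1
          _ ≤ valSI A (spCost w T) v :=
            le_iSup (fun σ2 => ⨅ σ1 : A.Strategy,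
              spCost w T (outcome A ![σ1, σ2] v)) (SPDet.str2 A T w k)
      have hlt : (k : ℝ≥0∞) < valSI A (spCost w T) v :=
        lt_of_lt_of_le (by exact_mod_cast Nat.lt_succ_self k) h2
      exact absurd hk (not_lt.2 hlt.le)
    have hIS : valIS A (spCost w T) v = ⊤ := top_le_iff.1 (htop ▸ hle)
    exact ⟨hIS.trans htop.symm, Or.inr hIS⟩
end

section
/- Let G = (A, SPath^T_w) be a two-player zero-sum shortest-path game on a possibly infinite arena. Then player 1 has a memoryless strategy σ_1 that is uniformly optimal in G (from every vertex v, every play consistent with σ_1 from v has shortest-path cost at most val(v)) and that is uniformly winning in the zero-sum reachability game (A, Reach(T)) (from every vertex of player 1's winning region for Reach(T), every play consistent with σ_1 visits T). -/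
open scoped ENNReal Classical

open Arena

/-!
Shortest-path values lie in `ℕ ∪ {∞}`. Call an edge `v → u` optimal if `w v u + val u ≤ val v`;
every edge out of a player-2 vertex outside `T` is optimal, and so is every edge out of a vertex
of infinite value. Player 1 (owner `0`) plays memorylessly down the transfinite attractor of `T`
in which player 1 may use only optimal edges: the attractor rank strictly decreases along every
consistent play, so `T` is reached, and the optimal-edge inequalities telescope to `cost ≤ val`.

It remains to see that the attractor contains every vertex of finite value and the whole
reachability winning region. Off the attractor player 2 can keep the play among finite-value
vertices, which player 1 can leave only along a non-optimal edge; as values are integers this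
costs at least one more than the least value there, so off the attractor all values are infinite.
Then every player-1 edge out of the complement is optimal, so the complement is a trap for
player 1.
-/

lemma exists_forall_le_mem_and_succ_notMem {α : Type*} {S : Set α} {f : ℕ → α}
    (h0 : f 0 ∈ S) (h : ∃ j, f j ∉ S) : ∃ k, (∀ j ≤ k, f j ∈ S) ∧ f (k + 1) ∉ S := by
  have hex : ∃ k, f (k + 1) ∉ S := by
    obtain ⟨_ | j, hj⟩ := h
    · exact absurd h0 hj
    · exact ⟨j, hj⟩
  refine ⟨Nat.find hex, ?_, Nat.find_spec hex⟩
  rintro (_ | j) hj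
  · exact h0
  · exact not_not.mp (Nat.find_min hex (by omega))

lemma sum_range_add_le_of_forall_add_le {M : Type*} [AddCommMonoid M] [PartialOrder M]
    [IsOrderedAddMonoid M] {a b : ℕ → M} {k : ℕ} (h : ∀ j < k, a j + b (j + 1) ≤ b j) :
    ∑ j ∈ Finset.range k, a j + b k ≤ b 0 := by
  induction k with
  | zero => simp
  | succ k ih =>
    calc ∑ j ∈ Finset.range (k + 1), a j + b (k + 1)
        = ∑ j ∈ Finset.range k, a j + (a k + b (k + 1)) := by
          rw [Finset.sum_range_succ, add_assoc]
      _ ≤ ∑ j ∈ Finset.range k, a j + b k := by gcongr; exact h k (by omega)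
      _ ≤ b 0 := ih fun j hj => h j (by omega)

lemma ENat.natCast_add_one_le_of_lt {n k : ℕ} {m : ℕ∞}
    (h : (n : ℝ≥0∞) < k + m) : (n : ℝ≥0∞) + 1 ≤ k + m := by
  have h' : ((n : ℕ∞) : ℝ≥0∞) < ((k + m : ℕ∞) : ℝ≥0∞) := by simpa using h
  simpa using ENat.toENNReal_le.mpr (Order.add_one_le_of_lt (ENat.toENNReal_lt.mp h'))

namespace Arena

variable {V : Type} {n : ℕ}

noncomputable def choiceStrategy (A : Arena V n) (P : V → V → Prop) : A.Strategy where
  next _ v := if h : ∃ u, A.E v u ∧ P v u then h.choose else (A.no_deadlock v).choose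
  valid _ v := by
    split_ifs with h
    · exact h.choose_spec.1
    · exact (A.no_deadlock v).choose_spec

instance (A : Arena V n) : Nonempty A.Strategy := ⟨A.choiceStrategy fun _ _ => True⟩

lemma choiceStrategy_memoryless (A : Arena V n) (P : V → V → Prop) :
    Memoryless (A.choiceStrategy P) := fun _ _ _ => rfl

lemma choiceStrategy_spec (A : Arena V n) {P : V → V → Prop} {v : V}
    (h : ∃ u, A.E v u ∧ P v u) (hist : List V) : P v ((A.choiceStrategy P).next hist v) := by
  simp only [choiceStrategy, dif_pos h]
  exact h.choose_spec.2

def Strategy.shift {A : Arena V n} (σ : A.Strategy) (p : List V) : A.Strategy where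
  next h v := σ.next (p ++ h) v
  valid _ _ := σ.valid _ _

def Strategy.switch {A : Arena V n} (σ τ : A.Strategy) (k : ℕ) : A.Strategy where
  next h v := if h.length < k then σ.next h v else τ.next (h.drop k) v
  valid h v := by split_ifs <;> apply Strategy.valid

lemma pref_succ (π : ℕ → V) (j : ℕ) : pref π (j + 1) = pref π j ++ [π j] := by
  simp [pref, List.range_succ]

section Outcome

variable {A : Arena V n}

lemma outcome_zero (σ : Fin n → A.Strategy) (v : V) : outcome A σ v 0 = v := rfl

lemma outcomeAux_fst (σ : Fin n → A.Strategy) (v : V) (j : ℕ) :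
    (outcomeAux A σ v j).1 = pref (outcome A σ v) j := by
  induction j with
  | zero => rfl
  | succ j ih => rw [outcomeAux, pref_succ, ← ih]; rfl

lemma outcomeAux_eq (σ : Fin n → A.Strategy) (v : V) (j : ℕ) :
    outcomeAux A σ v j = (pref (outcome A σ v) j, outcome A σ v j) :=
  Prod.ext (outcomeAux_fst σ v j) rfl

lemma outcome_succ (σ : Fin n → A.Strategy) (v : V) (j : ℕ) :
    outcome A σ v (j + 1) =
      (σ (A.owner (outcome A σ v j))).next (pref (outcome A σ v) j) (outcome A σ v j) := by
  rw [outcome, outcomeAux, ← outcomeAux_fst]; rfl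

lemma outcome_isPlay (σ : Fin n → A.Strategy) (v : V) : A.IsPlay (outcome A σ v) := by
  intro j
  rw [outcome_succ]
  apply Strategy.valid

lemma outcome_consistent (σ : Fin n → A.Strategy) (v : V) (i : Fin n) :
    A.Consistent i (σ i) (outcome A σ v) := by
  intro j hj
  rw [outcome_succ, hj]

end Outcome

section TwoPlayer

variable {A : Arena V 2}

lemma outcome_succ_of_owner_eq_one (σ1 σ2 : A.Strategy) (v : V) {j : ℕ}
    (ho : A.owner (outcome A ![σ1, σ2] v j) = 1) :
    outcome A ![σ1, σ2] v (j + 1) =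
      σ2.next (pref (outcome A ![σ1, σ2] v) j) (outcome A ![σ1, σ2] v j) := by
  rw [outcome_succ, ho]; rfl

lemma outcomeAux_switch_of_le (σ1 σ2 τ : A.Strategy) (v : V) {k j : ℕ} (hj : j ≤ k) :
    outcomeAux A ![σ1, σ2.switch τ k] v j = outcomeAux A ![σ1, σ2] v j := by
  induction j with
  | zero => rfl
  | succ j ih =>
    rw [outcomeAux, outcomeAux, ih (by omega)]
    have hlen : (outcomeAux A ![σ1, σ2] v j).1.length < k := by
      simp only [outcomeAux_fst, pref, List.length_map, List.length_range]; omega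
    by_cases ho : A.owner (outcomeAux A ![σ1, σ2] v j).2 = 0
    · simp [ho]
    · simp [Fin.eq_one_of_ne_zero _ ho, Strategy.switch, hlen]

lemma outcomeAux_switch_add (σ1 σ2 τ : A.Strategy) (v : V) (k m : ℕ) :
    outcomeAux A ![σ1, σ2.switch τ k] v (m + k) =
      (pref (outcome A ![σ1, σ2] v) k ++
        (outcomeAux A ![σ1.shift (pref (outcome A ![σ1, σ2] v) k), τ]
          (outcome A ![σ1, σ2] v k) m).1,
       (outcomeAux A ![σ1.shift (pref (outcome A ![σ1, σ2] v) k), τ]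
          (outcome A ![σ1, σ2] v k) m).2) := by
  induction m with
  | zero =>
    rw [zero_add, outcomeAux_switch_of_le σ1 σ2 τ v le_rfl, outcomeAux_eq]
    simp [outcomeAux]
  | succ m ih =>
    rw [Nat.add_right_comm, outcomeAux, ih, outcomeAux]
    set q := outcomeAux A ![σ1.shift (pref (outcome A ![σ1, σ2] v) k), τ]
      (outcome A ![σ1, σ2] v k) m
    by_cases ho : A.owner q.2 = 0
    · simp [ho, Strategy.shift]
    · simp [Fin.eq_one_of_ne_zero _ ho, Strategy.switch, pref]

lemma outcome_switch_of_le (σ1 σ2 τ : A.Strategy) (v : V) {k j : ℕ} (hj : j ≤ k) :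
    outcome A ![σ1, σ2.switch τ k] v j = outcome A ![σ1, σ2] v j :=
  congrArg Prod.snd (outcomeAux_switch_of_le σ1 σ2 τ v hj)

lemma outcome_switch_add (σ1 σ2 τ : A.Strategy) (v : V) (k m : ℕ) :
    outcome A ![σ1, σ2.switch τ k] v (m + k) =
      outcome A ![σ1.shift (pref (outcome A ![σ1, σ2] v) k), τ]
        (outcome A ![σ1, σ2] v k) m := by
  rw [outcome, outcome, outcomeAux_switch_add]

end TwoPlayer

section ShortestPath

variable (w : V → V → ℕ) (T : Set V)

noncomputable def prefixWeight (π : ℕ → V) (k : ℕ) : ℝ≥0∞ :=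
  ∑ j ∈ Finset.range k, (w (π j) (π (j + 1)) : ℝ≥0∞)

variable {w T}

lemma prefixWeight_congr {π π' : ℕ → V} {k : ℕ} (h : ∀ j ≤ k, π j = π' j) :
    prefixWeight w π k = prefixWeight w π' k :=
  Finset.sum_congr rfl fun j hj => by
    rw [Finset.mem_range] at hj
    rw [h j hj.le, h (j + 1) hj]

lemma le_prefixWeight_succ (π : ℕ → V) (k : ℕ) :
    (w (π k) (π (k + 1)) : ℝ≥0∞) ≤ prefixWeight w π (k + 1) := by
  rw [prefixWeight, Finset.sum_range_succ]
  exact le_add_self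

lemma spCost_le_prefixWeight {π : ℕ → V} {k : ℕ} (h : π k ∈ T) :
    spCost w T π ≤ prefixWeight w π k := by
  rw [spCost, if_pos ⟨k, h⟩]
  exact Finset.sum_le_sum_of_subset (Finset.range_subset_range.mpr (Nat.sInf_le h))

lemma spCost_eq_prefixWeight_add {π : ℕ → V} {k : ℕ} (h : ∀ j < k, π j ∉ T) :
    spCost w T π = prefixWeight w π k + spCost w T (fun m => π (m + k)) := by
  by_cases hT : ∃ j, π j ∈ T
  · have hk : k ≤ sInf {j | π j ∈ T} := by
      by_contra hlt
      exact h _ (not_le.mp hlt) (Nat.sInf_mem hT)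
    have hT' : ∃ m, π (m + k) ∈ T := by
      obtain ⟨j, hj⟩ := hT
      exact ⟨j - k, by rwa [Nat.sub_add_cancel ((hk.trans (Nat.sInf_le hj)))]⟩
    rw [spCost, spCost, if_pos hT, if_pos hT', ← Nat.sInf_add hk, add_comm _ k,
      Finset.sum_range_add, prefixWeight]
    simp only [add_comm k, Nat.add_right_comm _ 1 k]
  · have hT' : ¬ ∃ m, π (m + k) ∈ T := fun ⟨m, hm⟩ => hT ⟨m + k, hm⟩
    rw [spCost, spCost, if_neg hT, if_neg hT', add_top]

lemma exists_spCost_eq_enat (π : ℕ → V) : ∃ m : ℕ∞, spCost w T π = m := by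
  rw [spCost]
  split_ifs
  · exact ⟨(∑ j ∈ Finset.range (sInf {k | π k ∈ T}), w (π j) (π (j + 1)) : ℕ),
      by rw [ENat.toENNReal_coe, Nat.cast_sum]⟩
  · exact ⟨⊤, by simp⟩

end ShortestPath

section Value

variable (w : V → V → ℕ) (T : Set V) (A : Arena V 2)

lemma exists_valIS_eq_enat (v : V) : ∃ m : ℕ∞, valIS A (spCost w T) v = m := by
  choose c hc using fun π => exists_spCost_eq_enat (w := w) (T := T) π
  exact ⟨⨅ σ1, ⨆ σ2, c (outcome A ![σ1, σ2] v), by simp [valIS, hc]⟩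

lemma prefixWeight_add_valIS_le_iSup (σ1 σ2 : A.Strategy) (v : V) {k : ℕ}
    (hT : ∀ j < k, outcome A ![σ1, σ2] v j ∉ T) :
    prefixWeight w (outcome A ![σ1, σ2] v) k + valIS A (spCost w T) (outcome A ![σ1, σ2] v k)
      ≤ ⨆ τ : A.Strategy, spCost w T (outcome A ![σ1, τ] v) := by
  set π := outcome A ![σ1, σ2] v
  -- player 2 follows `σ2` for `k` steps, then answers the residual strategy of player 1
  have hswitch : ∀ τ : A.Strategy,
      prefixWeight w π k + spCost w T (outcome A ![σ1.shift (pref π k), τ] (π k)) =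
        spCost w T (outcome A ![σ1, σ2.switch τ k] v) := by
    intro τ
    have hT' : ∀ j < k, outcome A ![σ1, σ2.switch τ k] v j ∉ T := fun j hj => by
      rw [outcome_switch_of_le σ1 σ2 τ v hj.le]; exact hT j hj
    rw [spCost_eq_prefixWeight_add hT',
      prefixWeight_congr fun j hj => outcome_switch_of_le σ1 σ2 τ v hj]
    simp only [outcome_switch_add, π]
  calc prefixWeight w π k + valIS A (spCost w T) (π k)
      ≤ prefixWeight w π k +
          ⨆ τ : A.Strategy, spCost w T (outcome A ![σ1.shift (pref π k), τ] (π k)) := by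
        gcongr; exact iInf_le _ _
    _ = ⨆ τ : A.Strategy, spCost w T (outcome A ![σ1, σ2.switch τ k] v) := by
        rw [ENNReal.add_iSup]; simp only [hswitch]
    _ ≤ ⨆ τ : A.Strategy, spCost w T (outcome A ![σ1, τ] v) :=
        iSup_le fun τ => le_iSup (fun τ => spCost w T (outcome A ![σ1, τ] v)) _

def OptimalEdge (v u : V) : Prop :=
  (w v u : ℝ≥0∞) + valIS A (spCost w T) u ≤ valIS A (spCost w T) v

variable {w T A}

lemma optimalEdge_of_owner_eq_one {v u : V} (ho : A.owner v = 1) (hT : v ∉ T) (hE : A.E v u) :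
    OptimalEdge w T A v u := by
  refine le_iInf fun σ1 => ?_
  set σ2 := A.choiceStrategy fun _ x => x = u
  have h1 : outcome A ![σ1, σ2] v 1 = u :=
    (outcome_succ_of_owner_eq_one σ1 σ2 v (j := 0) ho).trans
      (choiceStrategy_spec A (P := fun _ x => x = u) ⟨u, hE, rfl⟩ _)
  have h := prefixWeight_add_valIS_le_iSup w T A σ1 σ2 v (k := 1) fun j hj => by
    rwa [Nat.lt_one_iff.mp hj]
  simpa [prefixWeight, h1, outcome_zero] using h

end Value

section Attractor

variable (A : Arena V 2) (T : Set V) (R : V → V → Prop)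

def attractorStep (S : Set V) : Set V :=
  {v | v ∈ T ∨ (A.owner v = 0 ∧ ∃ u, A.E v u ∧ R v u ∧ u ∈ S) ∨
    (A.owner v = 1 ∧ ∀ u, A.E v u → u ∈ S)}

noncomputable def attractorAt (α : Ordinal.{0}) : Set V :=
  A.attractorStep T R (⋃ β, ⋃ (_ : β < α), attractorAt β)
termination_by α

def attractor : Set V := ⋃ α, A.attractorAt T R α

noncomputable def attractorRank (v : V) : Ordinal.{0} := sInf {α | v ∈ A.attractorAt T R α}

variable {A T R}

lemma attractorStep_mono : Monotone (A.attractorStep T R) := by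
  rintro S S' hS v (hv | ⟨ho, u, hE, hR, hu⟩ | ⟨ho, hall⟩)
  · exact Or.inl hv
  · exact Or.inr (Or.inl ⟨ho, u, hE, hR, hS hu⟩)
  · exact Or.inr (Or.inr ⟨ho, fun u hE => hS (hall u hE)⟩)

lemma mem_attractorAt_attractorRank {v : V} (h : v ∈ A.attractor T R) :
    v ∈ A.attractorAt T R (A.attractorRank T R v) :=
  csInf_mem (Set.mem_iUnion.mp h)

lemma attractorRank_le {v : V} {α : Ordinal.{0}} (h : v ∈ A.attractorAt T R α) :
    A.attractorRank T R v ≤ α :=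
  csInf_le' h

lemma attractorStep_attractor_subset :
    A.attractorStep T R (A.attractor T R) ⊆ A.attractor T R := by
  intro v hv
  -- the attractor is already complete at the successor of the supremum of all ranks
  set α := ⨆ u : A.attractor T R, A.attractorRank T R u
  refine Set.mem_iUnion.mpr ⟨Order.succ α, ?_⟩
  rw [attractorAt]
  refine attractorStep_mono (fun u hu => ?_) hv
  simp only [Set.mem_iUnion]
  exact ⟨_, (le_ciSup Ordinal.bddAbove_of_small ⟨u, hu⟩).trans_lt (Order.lt_succ α),
    mem_attractorAt_attractorRank hu⟩

lemma subset_attractor : T ⊆ A.attractor T R :=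
  fun _ hv => attractorStep_attractor_subset (Or.inl hv)

lemma mem_attractorStep_rank_lt {v : V} (h : v ∈ A.attractor T R) :
    v ∈ A.attractorStep T R
      {u | u ∈ A.attractor T R ∧ A.attractorRank T R u < A.attractorRank T R v} := by
  have hv := mem_attractorAt_attractorRank h
  rw [attractorAt] at hv
  refine attractorStep_mono (fun u hu => ?_) hv
  simp only [Set.mem_iUnion] at hu
  obtain ⟨β, hβ, hu⟩ := hu
  exact ⟨Set.mem_iUnion.mpr ⟨β, hu⟩, (attractorRank_le hu).trans_lt hβ⟩

end Attractor

section OptimalStrategy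

variable {w : V → V → ℕ} {T : Set V} {A : Arena V 2}

variable (w T A)

def finiteValueCompl : Set V :=
  {x | x ∉ A.attractor T (OptimalEdge w T A) ∧ valIS A (spCost w T) x ≠ ⊤}

variable {w T A}

lemma notMem_of_mem_finiteValueCompl {x : V} (hx : x ∈ finiteValueCompl w T A) : x ∉ T :=
  fun hxT => hx.1 (subset_attractor hxT)

lemma exists_succ_mem_finiteValueCompl {x : V} (hx : x ∈ finiteValueCompl w T A)
    (ho : A.owner x = 1) : ∃ u, A.E x u ∧ u ∈ finiteValueCompl w T A := by
  by_contra! hno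
  refine hx.1 (attractorStep_attractor_subset (Or.inr (Or.inr ⟨ho, fun u hE => ?_⟩)))
  by_contra hu
  have hopt := optimalEdge_of_owner_eq_one (w := w) ho (notMem_of_mem_finiteValueCompl hx) hE
  exact hno u hE ⟨hu, ne_top_of_le_ne_top hx.2 (le_add_self.trans hopt)⟩

lemma natCast_add_one_le_valIS {n : ℕ}
    (hn : ∀ x ∈ finiteValueCompl w T A, (n : ℝ≥0∞) ≤ valIS A (spCost w T) x)
    {x₀ : V} (hx₀ : x₀ ∈ finiteValueCompl w T A) :
    (n : ℝ≥0∞) + 1 ≤ valIS A (spCost w T) x₀ := by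
  refine le_iInf fun σ1 => ?_
  set g := A.choiceStrategy fun _ u => u ∈ finiteValueCompl w T A
  set π := outcome A ![σ1, g] x₀
  by_cases hstay : ∀ j, π j ∈ finiteValueCompl w T A
  · have hcost : spCost w T π = ⊤ :=
      if_neg fun ⟨j, hj⟩ => notMem_of_mem_finiteValueCompl (hstay j) hj
    exact le_iSup_of_le g (hcost ▸ le_top)
  obtain ⟨k, hbefore, hk⟩ := exists_forall_le_mem_and_succ_notMem hx₀ (not_forall.mp hstay)
  have hπk := hbefore k le_rfl
  have ho : A.owner (π k) = 0 := by
    by_contra ho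
    have ho := Fin.eq_one_of_ne_zero _ ho
    have hnext : π (k + 1) = g.next (pref π k) (π k) :=
      outcome_succ_of_owner_eq_one σ1 g x₀ ho
    exact hk (hnext ▸ choiceStrategy_spec A (exists_succ_mem_finiteValueCompl hπk ho) _)
  have hnot : ¬ OptimalEdge w T A (π k) (π (k + 1)) := fun hopt =>
    hk ⟨fun hmem => hπk.1 (attractorStep_attractor_subset
        (Or.inr (Or.inl ⟨ho, _, outcome_isPlay _ x₀ k, hopt, hmem⟩))),
      ne_top_of_le_ne_top hπk.2 (le_add_self.trans hopt)⟩
  obtain ⟨m, hm⟩ := exists_valIS_eq_enat w T A (π (k + 1))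
  calc (n : ℝ≥0∞) + 1
      ≤ w (π k) (π (k + 1)) + valIS A (spCost w T) (π (k + 1)) := by
        rw [OptimalEdge, hm] at hnot
        rw [hm]
        exact ENat.natCast_add_one_le_of_lt ((hn _ hπk).trans_lt (not_le.mp hnot))
    _ ≤ prefixWeight w π (k + 1) + valIS A (spCost w T) (π (k + 1)) := by
        gcongr; exact le_prefixWeight_succ π k
    _ ≤ ⨆ τ, spCost w T (outcome A ![σ1, τ] x₀) :=
        prefixWeight_add_valIS_le_iSup w T A σ1 g x₀ fun j hj =>
          notMem_of_mem_finiteValueCompl (hbefore j (by omega))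

lemma mem_attractor_of_valIS_ne_top {v : V} (hv : valIS A (spCost w T) v ≠ ⊤) :
    v ∈ A.attractor T (OptimalEdge w T A) := by
  by_contra hnot
  have hbound : ∀ n : ℕ, ∀ x ∈ finiteValueCompl w T A,
      (n : ℝ≥0∞) ≤ valIS A (spCost w T) x := by
    intro n
    induction n with
    | zero => simp
    | succ n ih =>
      intro x hx
      rw [Nat.cast_succ]
      exact natCast_add_one_le_valIS ih hx
  obtain ⟨n, hn⟩ := ENNReal.exists_nat_gt hv
  exact (hbound n v ⟨hnot, hv⟩).not_gt hn

lemma winRegion_reachObj_subset_attractor :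
    WinRegion A 0 (ReachObj T) ⊆ A.attractor T (OptimalEdge w T A) := by
  rintro v ⟨σ, hσ⟩
  by_contra hv
  set Attr := A.attractor T (OptimalEdge w T A)
  set g := A.choiceStrategy fun _ u => u ∉ Attr
  set π := outcome A ![σ, g] v
  have hout : ∀ j, π j ∉ Attr := by
    intro j
    induction j with
    | zero => exact hv
    | succ j ih =>
      by_cases ho : A.owner (π j) = 0
      · have htop : valIS A (spCost w T) (π j) = ⊤ := by
          by_contra hfin
          exact ih (mem_attractor_of_valIS_ne_top hfin)
        intro hmem
        refine ih (attractorStep_attractor_subset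
          (Or.inr (Or.inl ⟨ho, _, outcome_isPlay _ v j, ?_, hmem⟩)))
        rw [OptimalEdge, htop]
        exact le_top
      · have ho := Fin.eq_one_of_ne_zero _ ho
        have hnext : π (j + 1) = g.next (pref π j) (π j) :=
          outcome_succ_of_owner_eq_one σ g v ho
        rw [hnext]
        refine choiceStrategy_spec A (P := fun _ u => u ∉ Attr) ?_ _
        by_contra! hall
        exact ih (attractorStep_attractor_subset (Or.inr (Or.inr ⟨ho, hall⟩)))
  obtain ⟨j, hj⟩ := hσ π (outcome_isPlay _ v) rfl (outcome_consistent _ v 0)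
  exact hout j (subset_attractor hj)

variable (w T A)

def OptimalDescent (v u : V) : Prop :=
  OptimalEdge w T A v u ∧ u ∈ A.attractor T (OptimalEdge w T A) ∧
    A.attractorRank T (OptimalEdge w T A) u < A.attractorRank T (OptimalEdge w T A) v

noncomputable def optimalStrategy : A.Strategy := A.choiceStrategy (OptimalDescent w T A)

variable {w T A}

lemma optimalDescent_of_consistent {v u : V} (hv : v ∈ A.attractor T (OptimalEdge w T A))
    (hT : v ∉ T) (hE : A.E v u) {h : List V}
    (hu : A.owner v = 0 → u = (optimalStrategy w T A).next h v) : OptimalDescent w T A v u := by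
  rcases mem_attractorStep_rank_lt hv with hvT | ⟨ho, hex⟩ | ⟨ho, hall⟩
  · exact absurd hvT hT
  · rw [hu ho]
    exact choiceStrategy_spec A hex h
  · exact ⟨optimalEdge_of_owner_eq_one ho hT hE, hall u hE⟩

lemma exists_mem_prefixWeight_add_valIS_le {π : ℕ → V} (hp : A.IsPlay π)
    (hc : A.Consistent 0 (optimalStrategy w T A) π)
    (h0 : π 0 ∈ A.attractor T (OptimalEdge w T A)) :
    ∃ k, π k ∈ T ∧
      prefixWeight w π k + valIS A (spCost w T) (π k) ≤ valIS A (spCost w T) (π 0) := by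
  have hstep := fun j (hj : π j ∈ A.attractor T (OptimalEdge w T A)) (hjT : π j ∉ T) =>
    optimalDescent_of_consistent hj hjT (hp j) (hc j)
  have hin : ∀ j, (∀ i < j, π i ∉ T) → π j ∈ A.attractor T (OptimalEdge w T A) := by
    intro j
    induction j with
    | zero => exact fun _ => h0
    | succ j ih =>
      exact fun hT => (hstep j (ih fun i hi => hT i (by omega)) (hT j (by omega))).2.1
  have hreach : ∃ k, π k ∈ T := by
    by_contra! hno
    obtain ⟨j, hj⟩ := WellFounded.not_rel_apply_succ (r := (· < ·))
      fun j => A.attractorRank T (OptimalEdge w T A) (π j)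
    exact hj (hstep j (hin j fun i _ => hno i) (hno j)).2.2
  have hfirst : ∀ j < Nat.find hreach, π j ∉ T := fun j hj => Nat.find_min hreach hj
  refine ⟨Nat.find hreach, Nat.find_spec hreach, ?_⟩
  rw [prefixWeight]
  refine sum_range_add_le_of_forall_add_le (a := fun j => (w (π j) (π (j + 1)) : ℝ≥0∞))
    (b := fun j => valIS A (spCost w T) (π j)) fun j hj => ?_
  exact (hstep j (hin j fun i hi => hfirst i (by omega)) (hfirst j hj)).1

end OptimalStrategy

end Arena

/-- In a zero-sum shortest-path game, player 1 has a memoryless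
uniformly optimal strategy that is also uniformly winning in the associated
zero-sum reachability game. -/
theorem spath_player1_memoryless_uniformly_optimal
    (V : Type) (A : Arena V 2) (T : Set V) (w : V → V → ℕ) :
    ∃ σ1 : A.Strategy, Memoryless σ1 ∧
      (∀ (v : V) (π : ℕ → V), A.IsPlay π → π 0 = v → A.Consistent 0 σ1 π →
        spCost w T π ≤ valIS A (spCost w T) v) ∧
      (∀ v ∈ WinRegion A 0 (ReachObj T),
        ∀ π : ℕ → V, A.IsPlay π → π 0 = v → A.Consistent 0 σ1 π → ∃ j, π j ∈ T) := by
  refine ⟨optimalStrategy w T A, choiceStrategy_memoryless _ _, ?_, ?_⟩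
  · rintro v π hp rfl hc
    by_cases hv : valIS A (spCost w T) (π 0) = ⊤
    · exact hv ▸ le_top
    obtain ⟨k, hk, hle⟩ :=
      exists_mem_prefixWeight_add_valIS_le hp hc (mem_attractor_of_valIS_ne_top hv)
    exact (spCost_le_prefixWeight hk).trans (le_self_add.trans hle)
  · rintro v hv π hp rfl hc
    obtain ⟨k, hk, -⟩ :=
      exists_mem_prefixWeight_add_valIS_le hp hc (winRegion_reachObj_subset_attractor hv)
    exact ⟨k, hk⟩
end

section
/- Let G be an n-player safety game on a possibly infinite arena, where player i's objective is Safe(T_i) for a set T_i ⊆ V. A play π = v_0 v_1 … is the outcome from v_0 of some Nash equilibrium if and only if for every player i with π ∉ Safe(T_i), we have v_j ∉ W_i(Safe(T_i)) for every j ≤ min{k ∈ ℕ : v_k ∈ T_i}, where W_i(Safe(T_i)) is the winning region of player i in their coalition game. -/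
open scoped ENNReal Classical

open Arena

namespace NEAux
open Arena
variable {V : Type} {n : ℕ}

noncomputable def anySucc (A : Arena V n) (v : V) : V := (A.no_deadlock v).choose

lemma anySucc_spec (A : Arena V n) (v : V) : A.E v (anySucc A v) := (A.no_deadlock v).choose_spec

lemma pref_length (π : ℕ → V) (j : ℕ) : (pref π j).length = j := by simp [pref]

lemma pref_succ (π : ℕ → V) (j : ℕ) : pref π (j + 1) = pref π j ++ [π j] := by
  simp [pref, List.range_succ]

lemma pref_getElem (π : ℕ → V) (j m : ℕ) (hm : m < (pref π j).length) :
    (pref π j)[m] = π m := by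
  simp [pref] at hm ⊢

lemma pref_congr {π π' : ℕ → V} (j : ℕ) (h : ∀ m < j, π m = π' m) : pref π j = pref π' j := by
  unfold pref
  exact List.map_congr_left (fun x hx => h x (List.mem_range.mp hx))

lemma pref_drop (π : ℕ → V) (j m : ℕ) :
    (pref π (j + m)).drop j = pref (fun t => π (j + t)) m := by
  unfold pref
  rw [List.range_add, List.map_append, List.drop_left' (by simp), List.map_map]
  rfl

lemma outcomeAux_fst (A : Arena V n) (σ : Fin n → A.Strategy) (v0 : V) (j : ℕ) :
    (outcomeAux A σ v0 j).1 = pref (outcome A σ v0) j := by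
  induction j with
  | zero => simp [outcomeAux, pref]
  | succ j ih =>
      show (outcomeAux A σ v0 j).1 ++ [(outcomeAux A σ v0 j).2] = _
      rw [ih, pref_succ]; rfl

lemma outcome_succ (A : Arena V n) (σ : Fin n → A.Strategy) (v0 : V) (j : ℕ) :
    outcome A σ v0 (j + 1) =
      (σ (A.owner (outcome A σ v0 j))).next (pref (outcome A σ v0) j) (outcome A σ v0 j) := by
  show (outcomeAux A σ v0 (j+1)).2 = _
  rw [show (outcomeAux A σ v0 (j+1)).2
      = (σ (A.owner (outcomeAux A σ v0 j).2)).next (outcomeAux A σ v0 j).1 (outcomeAux A σ v0 j).2 from rfl,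
    outcomeAux_fst]
  rfl

lemma outcome_isPlay (A : Arena V n) (σ : Fin n → A.Strategy) (v0 : V) :
    A.IsPlay (outcome A σ v0) := by
  intro j; rw [outcome_succ]; exact (σ _).valid _ _

lemma coalition_owner_eq_zero (A : Arena V n) (i : Fin n) (u : V) :
    (coalition A i).owner u = (0 : Fin 2) ↔ A.owner u = i := by
  by_cases h : A.owner u = i <;> simp [coalition, h]

end NEAux

namespace NEAux
open Arena
variable {V : Type} {n : ℕ}

def attrA (A : Arena V n) (i : Fin n) (Ti : Set V) (α : Ordinal.{0}) (v : V) : Prop :=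
  v ∈ Ti ∨
    (A.owner v ≠ i ∧ ∃ v', A.E v v' ∧ ∃ β, ∃ _ : β < α, attrA A i Ti β v') ∨
    (A.owner v = i ∧ ∀ v', A.E v v' → ∃ β, ∃ _ : β < α, attrA A i Ti β v')
termination_by α

def AttrAll (A : Arena V n) (i : Fin n) (Ti : Set V) : Set V := {v | ∃ α : Ordinal.{0}, attrA A i Ti α v}

noncomputable def rk (A : Arena V n) (i : Fin n) (Ti : Set V) (v : V) : Ordinal.{0} :=
  sInf {α : Ordinal.{0} | attrA A i Ti α v}

lemma attrA_of_mem (A : Arena V n) (i : Fin n) (Ti : Set V) (α : Ordinal.{0}) {v : V}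
    (h : v ∈ Ti) : attrA A i Ti α v := by rw [attrA]; exact Or.inl h

lemma rk_mem {A : Arena V n} {i : Fin n} {Ti : Set V} {v : V} (h : v ∈ AttrAll A i Ti) :
    attrA A i Ti (rk A i Ti v) v := csInf_mem h

lemma rk_le {A : Arena V n} {i : Fin n} {Ti : Set V} {v : V} {α : Ordinal.{0}}
    (h : attrA A i Ti α v) : rk A i Ti v ≤ α := csInf_le' h

lemma attr_succ_of {A : Arena V n} {i : Fin n} {Ti : Set V} {v : V}
    (hv : v ∈ AttrAll A i Ti) (hT : v ∉ Ti) (ho : A.owner v ≠ i) :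
    ∃ v', A.E v v' ∧ v' ∈ AttrAll A i Ti ∧ rk A i Ti v' < rk A i Ti v := by
  have h := rk_mem hv
  rw [attrA] at h
  rcases h with h | ⟨_, v', he, β, hβ, hβ'⟩ | ⟨ho', _⟩
  · exact absurd h hT
  · exact ⟨v', he, ⟨β, hβ'⟩, lt_of_le_of_lt (rk_le hβ') hβ⟩
  · exact absurd ho' ho

lemma attr_all_of {A : Arena V n} {i : Fin n} {Ti : Set V} {v : V}
    (hv : v ∈ AttrAll A i Ti) (hT : v ∉ Ti) (ho : A.owner v = i) :
    ∀ v', A.E v v' → v' ∈ AttrAll A i Ti ∧ rk A i Ti v' < rk A i Ti v := by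
  have h := rk_mem hv
  rw [attrA] at h
  rcases h with h | ⟨ho', _⟩ | ⟨_, hall⟩
  · exact absurd h hT
  · exact absurd ho ho'
  · intro v' he
    obtain ⟨β, hβ, hβ'⟩ := hall v' he
    exact ⟨⟨β, hβ'⟩, lt_of_le_of_lt (rk_le hβ') hβ⟩

noncomputable def punish (A : Arena V n) (i : Fin n) (Ti : Set V) (v : V) : V :=
  if h : ∃ v', A.E v v' ∧ v' ∈ AttrAll A i Ti ∧ rk A i Ti v' < rk A i Ti v then h.choose
  else anySucc A v

lemma punish_valid (A : Arena V n) (i : Fin n) (Ti : Set V) (v : V) :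
    A.E v (punish A i Ti v) := by
  unfold punish; split
  next h => exact h.choose_spec.1
  next => exact anySucc_spec A v

lemma punish_spec {A : Arena V n} {i : Fin n} {Ti : Set V} {v : V}
    (hv : v ∈ AttrAll A i Ti) (hT : v ∉ Ti) (ho : A.owner v ≠ i) :
    punish A i Ti v ∈ AttrAll A i Ti ∧ rk A i Ti (punish A i Ti v) < rk A i Ti v := by
  have h := attr_succ_of hv hT ho
  unfold punish
  rw [dif_pos h]
  exact ⟨h.choose_spec.2.1, h.choose_spec.2.2⟩

lemma reach (A : Arena V n) (i : Fin n) (Ti : Set V) :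
    ∀ (α : Ordinal.{0}) (v : V), v ∈ AttrAll A i Ti → rk A i Ti v ≤ α →
    ∀ ρ : ℕ → V, A.IsPlay ρ → ρ 0 = v →
      (∀ m, A.owner (ρ m) ≠ i → ρ (m + 1) = punish A i Ti (ρ m)) →
      ∃ k, ρ k ∈ Ti := by
  intro α
  induction α using Ordinal.induction with
  | _ α IH =>
    intro v hv hrk ρ hρ h0 hc
    by_cases hT : v ∈ Ti
    · exact ⟨0, h0 ▸ hT⟩
    have hshift : A.IsPlay (fun m => ρ (m + 1)) := fun m => hρ (m + 1)
    by_cases ho : A.owner v = i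
    · have h1 := attr_all_of hv hT ho (ρ 1) (h0 ▸ hρ 0)
      obtain ⟨k, hk⟩ := IH (rk A i Ti (ρ 1)) (lt_of_lt_of_le h1.2 hrk) (ρ 1) h1.1 le_rfl
        (fun m => ρ (m + 1)) hshift rfl (fun m hm => hc (m + 1) hm)
      exact ⟨k + 1, hk⟩
    · have h1 : ρ 1 = punish A i Ti v := by
        have := hc 0 (by rw [h0]; exact ho); rwa [h0] at this
      have hp := punish_spec hv hT ho
      rw [← h1] at hp
      obtain ⟨k, hk⟩ := IH (rk A i Ti (ρ 1)) (lt_of_lt_of_le hp.2 hrk) (ρ 1) hp.1 le_rfl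
        (fun m => ρ (m + 1)) hshift rfl (fun m hm => hc (m + 1) hm)
      exact ⟨k + 1, hk⟩

lemma win_of_not_attr {A : Arena V n} {i : Fin n} {Ti : Set V} {v : V}
    (hv : v ∉ AttrAll A i Ti) : v ∈ coalWin A i (SafeObj Ti) := by
  classical
  refine ⟨⟨fun _ u => if h : ∃ u', A.E u u' ∧ u' ∉ AttrAll A i Ti then h.choose
      else anySucc A u, ?_⟩, ?_⟩
  · intro h u
    split
    next hh => exact hh.choose_spec.1
    next => exact anySucc_spec A u
  · intro ρ hplay h0 hcons
    suffices hout : ∀ m, ρ m ∉ AttrAll A i Ti by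
      intro m hm
      exact hout m ⟨0, attrA_of_mem A i Ti 0 hm⟩
    intro m
    induction m with
    | zero => rw [h0]; exact hv
    | succ m ih =>
      by_cases ho : A.owner (ρ m) = i
      · have hc := hcons m ((coalition_owner_eq_zero A i (ρ m)).mpr ho)
        have hex : ∃ u', A.E (ρ m) u' ∧ u' ∉ AttrAll A i Ti := by
          by_contra hno
          push_neg at hno
          apply ih
          refine ⟨(⨆ x : {u' // A.E (ρ m) u'}, rk A i Ti x.1) + 1, ?_⟩
          rw [attrA]
          refine Or.inr (Or.inr ⟨ho, fun v' hv' => ⟨rk A i Ti v', ?_, rk_mem (hno v' hv')⟩⟩)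
          have h1 : rk A i Ti v' ≤ ⨆ x : {u' // A.E (ρ m) u'}, rk A i Ti x.1 :=
            le_ciSup (Ordinal.bddAbove_range _) (⟨v', hv'⟩ : {u' // A.E (ρ m) u'})
          exact lt_of_le_of_lt h1 (by rw [Ordinal.add_one_eq_succ]; exact Order.lt_succ _)
        rw [hc]
        show (dite _ _ _ : V) ∉ _
        rw [dif_pos hex]
        exact hex.choose_spec.2
      · intro hmem
        obtain ⟨α, hα⟩ := hmem
        apply ih
        refine ⟨α + 1, ?_⟩
        rw [attrA]
        exact Or.inr (Or.inl ⟨ho, ρ (m + 1), hplay m, α,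
          (by rw [Ordinal.add_one_eq_succ]; exact Order.lt_succ _), hα⟩)

end NEAux

namespace NEAux
open Arena
variable {V : Type} {n : ℕ}

noncomputable def divIdx (π : ℕ → V) (l : List V) : ℕ := sInf {m | l.getD m (π m) ≠ π m}

lemma divIdx_spec {π π' : ℕ → V} {d N : ℕ}
    (hagree : ∀ m ≤ d, π' m = π m) (hdiff : π' (d + 1) ≠ π (d + 1)) (hN : d + 1 ≤ N) :
    pref π' (N + 1) ≠ pref π (N + 1) ∧ divIdx π (pref π' (N + 1)) = d + 1 := by
  have hlen : (pref π' (N + 1)).length = N + 1 := pref_length _ _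
  have hmem : (d + 1) ∈ {m | (pref π' (N + 1)).getD m (π m) ≠ π m} := by
    have h1 : d + 1 < (pref π' (N + 1)).length := by omega
    show (pref π' (N + 1)).getD (d + 1) (π (d + 1)) ≠ π (d + 1)
    rw [List.getD_eq_getElem _ _ h1, pref_getElem]
    exact hdiff
  constructor
  · intro heq
    have h2 : (pref π' (N + 1)).getD (d + 1) (π (d + 1)) = π (d + 1) := by
      rw [heq, List.getD_eq_getElem _ _ (by rw [pref_length]; omega), pref_getElem]
    exact hmem h2
  · refine le_antisymm (Nat.sInf_le hmem) ?_
    unfold divIdx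
    by_contra hc
    push_neg at hc
    have h3 := Nat.sInf_mem (⟨d + 1, hmem⟩ :
      {m | (pref π' (N + 1)).getD m (π m) ≠ π m}.Nonempty)
    set m := sInf {m | (pref π' (N + 1)).getD m (π m) ≠ π m} with hm
    have hmd : m ≤ d := by omega
    apply h3
    have h1 : m < (pref π' (N + 1)).length := by omega
    rw [List.getD_eq_getElem _ _ h1, pref_getElem]
    exact hagree m hmd

lemma last_eq_of_concat_pref {π : ℕ → V} {h : List V} {v : V}
    (heq : h ++ [v] = pref π (h.length + 1)) : v = π h.length := by
  rw [pref_succ] at heq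
  have h2 : h.concat v = (pref π h.length).concat (π h.length) := by
    simpa [List.concat_eq_append] using heq
  exact (List.concat_inj.mp h2).2

noncomputable def eqNext (A : Arena V n) (T : Fin n → Set V) (π : ℕ → V)
    (h : List V) (v : V) : V :=
  if h ++ [v] = pref π (h.length + 1) then π (h.length + 1)
  else punish A (A.owner (π (divIdx π (h ++ [v]) - 1)))
    (T (A.owner (π (divIdx π (h ++ [v]) - 1)))) v

lemma eqNext_valid (A : Arena V n) (T : Fin n → Set V) (π : ℕ → V) (hπ : A.IsPlay π)
    (h : List V) (v : V) : A.E v (eqNext A T π h v) := by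
  unfold eqNext
  split
  next heq => rw [last_eq_of_concat_pref heq]; exact hπ h.length
  next => exact punish_valid A _ _ v

noncomputable def eqStrat (A : Arena V n) (T : Fin n → Set V) (π : ℕ → V)
    (hπ : A.IsPlay π) : A.Strategy where
  next := eqNext A T π
  valid := eqNext_valid A T π hπ

lemma eqNext_on (A : Arena V n) (T : Fin n → Set V) (π : ℕ → V) (m : ℕ) :
    eqNext A T π (pref π m) (π m) = π (m + 1) := by
  unfold eqNext
  simp only [pref_length]
  rw [if_pos (pref_succ π m).symm]

lemma eqStrat_outcome (A : Arena V n) (T : Fin n → Set V) (π : ℕ → V) (hπ : A.IsPlay π) :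
    ∀ m, outcome A (fun _ => eqStrat A T π hπ) (π 0) m = π m := by
  intro m
  induction m using Nat.strong_induction_on with
  | _ m IH =>
    cases m with
    | zero => rfl
    | succ m =>
      rw [outcome_succ,
        pref_congr m (fun x hx => IH x (Nat.lt_succ_of_lt hx)),
        IH m (Nat.lt_succ_self m)]
      exact eqNext_on A T π m

noncomputable def devStrat (A : Arena V n) (i : Fin n) (π : ℕ → V) (hπ : A.IsPlay π)
    (j : ℕ) (σw : (coalition A i).Strategy) : A.Strategy where
  next h v := if h.length < j ∧ h ++ [v] = pref π (h.length + 1) then π (h.length + 1)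
    else σw.next (h.drop j) v
  valid h v := by
    split
    next hcond => rw [last_eq_of_concat_pref hcond.2]; exact hπ h.length
    next => exact σw.valid (h.drop j) v

end NEAux

namespace NEAux
open Arena
variable {V : Type} {n : ℕ}

lemma right_main (A : Arena V n) (i : Fin n) (Ti : Set V) (π : ℕ → V) (hπ : A.IsPlay π)
    (σ : Fin n → A.Strategy) (hout : outcome A σ (π 0) = π)
    (hNE : ∀ τ : A.Strategy, outcome A (Function.update σ i τ) (π 0) ∈ SafeObj Ti →
      outcome A σ (π 0) ∈ SafeObj Ti)
    (hex : ∃ k, π k ∈ Ti) (j : ℕ) (hj : j ≤ sInf {k | π k ∈ Ti})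
    (hwin : π j ∈ coalWin A i (SafeObj Ti)) : False := by
  obtain ⟨k, hk⟩ := hex
  have hKT : π (sInf {k | π k ∈ Ti}) ∈ Ti :=
    (Nat.sInf_mem (⟨k, hk⟩ : {k | π k ∈ Ti}.Nonempty) : sInf {k | π k ∈ Ti} ∈ {k | π k ∈ Ti})
  obtain ⟨σw, hσw⟩ := hwin
  classical
  set σ'' := Function.update σ i (devStrat A i π hπ j σw) with hσ''
  have hsucc := outcome_succ A σ'' (π 0)
  have hagree : ∀ m, m ≤ j → outcome A σ'' (π 0) m = π m := by
    intro m
    induction m using Nat.strong_induction_on with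
    | _ m IH =>
      cases m with
      | zero => intro _; rfl
      | succ m =>
        intro hm
        have hpm : pref (outcome A σ'' (π 0)) m = pref π m :=
          pref_congr m (fun x hx => IH x (Nat.lt_succ_of_lt hx) (by omega))
        have hm' : outcome A σ'' (π 0) m = π m := IH m (Nat.lt_succ_self m) (by omega)
        rw [hsucc m, hpm, hm']
        by_cases ho : A.owner (π m) = i
        · rw [hσ'', ho, Function.update_self]
          show (if (pref π m).length < j ∧
                pref π m ++ [π m] = pref π ((pref π m).length + 1)
              then π ((pref π m).length + 1)
              else σw.next ((pref π m).drop j) (π m)) = π (m + 1)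
          simp only [pref_length]
          rw [if_pos ⟨by omega, (pref_succ π m).symm⟩]
        · rw [hσ'', Function.update_of_ne ho]
          have h2 := outcome_succ A σ (π 0) m
          rw [hout] at h2
          exact h2.symm
  have hcons : Consistent (coalition A i) 0 σw (fun t => outcome A σ'' (π 0) (j + t)) := by
    intro m hm
    have ho : A.owner (outcome A σ'' (π 0) (j + m)) = i :=
      (coalition_owner_eq_zero A i _).mp hm
    show outcome A σ'' (π 0) ((j + m) + 1) = _
    rw [hsucc (j + m), hσ'', ho, Function.update_self]
    show (if (pref (outcome A σ'' (π 0)) (j + m)).length < j ∧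
          pref (outcome A σ'' (π 0)) (j + m) ++ [outcome A σ'' (π 0) (j + m)]
            = pref π ((pref (outcome A σ'' (π 0)) (j + m)).length + 1)
        then π ((pref (outcome A σ'' (π 0)) (j + m)).length + 1)
        else σw.next ((pref (outcome A σ'' (π 0)) (j + m)).drop j)
          (outcome A σ'' (π 0) (j + m)))
      = σw.next (pref (fun t => outcome A σ'' (π 0) (j + t)) m) (outcome A σ'' (π 0) (j + m))
    simp only [pref_length]
    rw [if_neg (fun hc => absurd hc.1 (by omega)), pref_drop]
  have hρplay : (coalition A i).IsPlay (fun t => outcome A σ'' (π 0) (j + t)) :=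
    fun t => outcome_isPlay A σ'' (π 0) (j + t)
  have hρ0 : (fun t => outcome A σ'' (π 0) (j + t)) 0 = π j := hagree j le_rfl
  have hsafeρ := hσw _ hρplay hρ0 hcons
  have hsafe' : outcome A σ'' (π 0) ∈ SafeObj Ti := by
    intro m hm
    rcases lt_or_ge m j with h | h
    · rw [hagree m (le_of_lt h)] at hm
      exact Nat.notMem_of_lt_sInf (lt_of_lt_of_le h hj) hm
    · have hmj : m = j + (m - j) := by omega
      rw [hmj] at hm
      exact hsafeρ (m - j) hm
  have hfin := hNE (devStrat A i π hπ j σw) (hσ'' ▸ hsafe')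
  rw [hout] at hfin
  exact hfin _ hKT

lemma left_main (A : Arena V n) (T : Fin n → Set V) (π : ℕ → V) (hπ : A.IsPlay π)
    (H : ∀ i, (∃ k, π k ∈ T i) → ∀ j ≤ sInf {k | π k ∈ T i},
      π j ∉ coalWin A i (SafeObj (T i)))
    (i : Fin n) (τ : A.Strategy) (σ' : Fin n → A.Strategy)
    (hσ' : σ' = Function.update (fun _ => eqStrat A T π hπ) i τ)
    (hdev : outcome A σ' (π 0) ∈ SafeObj (T i)) : π ∈ SafeObj (T i) := by
  by_contra hns
  simp only [SafeObj, Set.mem_setOf_eq, not_forall, not_not] at hns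
  obtain ⟨k, hk⟩ := hns
  have hKT : π (sInf {k | π k ∈ T i}) ∈ T i :=
    (Nat.sInf_mem (⟨k, hk⟩ : {k | π k ∈ T i}.Nonempty) : sInf {k | π k ∈ T i} ∈ {k | π k ∈ T i})
  have hsucc := outcome_succ A σ' (π 0)
  by_cases hall : ∀ m, outcome A σ' (π 0) m = π m
  · exact hdev _ (by rw [hall]; exact hKT)
  · have hne : {m | outcome A σ' (π 0) m ≠ π m}.Nonempty := by
      push_neg at hall; exact hall
    have hm0 := Nat.sInf_mem hne
    have hpos : sInf {m | outcome A σ' (π 0) m ≠ π m} ≠ 0 := by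
      intro h0; rw [h0] at hm0; exact hm0 rfl
    obtain ⟨d, hd⟩ : ∃ d, sInf {m | outcome A σ' (π 0) m ≠ π m} = d + 1 :=
      ⟨sInf {m | outcome A σ' (π 0) m ≠ π m} - 1, by omega⟩
    rw [hd] at hm0
    have hdiff : outcome A σ' (π 0) (d + 1) ≠ π (d + 1) := hm0
    have hagree : ∀ m ≤ d, outcome A σ' (π 0) m = π m := fun m hm =>
      not_not.mp (Nat.notMem_of_lt_sInf (show m < sInf _ by rw [hd]; omega))
    have hpd : pref (outcome A σ' (π 0)) d = pref π d :=
      pref_congr d (fun x hx => hagree x (by omega))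
    have ho : A.owner (π d) = i := by
      by_contra hoi
      apply hdiff
      rw [hsucc d, hagree d le_rfl, hpd, hσ', Function.update_of_ne hoi]
      exact eqNext_on A T π d
    rcases le_or_gt (sInf {k | π k ∈ T i}) d with hKd | hdK
    · exact hdev _ (by rw [hagree _ hKd]; exact hKT)
    · have hdT : π d ∉ T i := Nat.notMem_of_lt_sInf hdK
      have hAd : π d ∈ AttrAll A i (T i) := by
        by_contra hna
        exact H i ⟨k, hk⟩ d (le_of_lt hdK) (win_of_not_attr hna)
      have hE : A.E (π d) (outcome A σ' (π 0) (d + 1)) := by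
        have h2 := outcome_isPlay A σ' (π 0) d
        rwa [hagree d le_rfl] at h2
      have hA1 := attr_all_of hAd hdT ho _ hE
      have hB : ∀ m, A.owner (outcome A σ' (π 0) (d + 1 + m)) ≠ i →
          outcome A σ' (π 0) (d + 1 + m + 1)
            = punish A i (T i) (outcome A σ' (π 0) (d + 1 + m)) := by
        intro m hom
        obtain ⟨hneq, hdiv⟩ := divIdx_spec hagree hdiff (show d + 1 ≤ d + 1 + m by omega)
        rw [hsucc (d + 1 + m),
          show σ' (A.owner (outcome A σ' (π 0) (d + 1 + m))) = eqStrat A T π hπ from by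
            rw [hσ'] at hom ⊢; exact Function.update_of_ne hom _ _]
        show eqNext A T π (pref (outcome A σ' (π 0)) (d + 1 + m))
            (outcome A σ' (π 0) (d + 1 + m)) = _
        unfold eqNext
        simp only [pref_length]
        rw [← pref_succ, if_neg hneq, hdiv]
        simp only [Nat.add_sub_cancel]
        rw [ho]
      obtain ⟨k', hk'⟩ := reach A i (T i) _ _ hA1.1 le_rfl
        (fun m => outcome A σ' (π 0) (d + 1 + m))
        (fun m => outcome_isPlay A σ' (π 0) (d + 1 + m)) rfl hB
      exact absurd hk' (hdev _)

end NEAux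


/-- Characterisation of Nash-equilibrium outcomes in safety games. -/
theorem ne_outcome_characterisation_safety
    (V : Type) (n : ℕ) (A : Arena V n) (T : Fin n → Set V)
    (π : ℕ → V) (hπ : A.IsPlay π) :
    (∃ σ : Fin n → A.Strategy,
        A.IsNEObj (fun i => SafeObj (T i)) σ (π 0) ∧ outcome A σ (π 0) = π) ↔
      ∀ i, (∃ k, π k ∈ T i) →
        ∀ j ≤ sInf {k | π k ∈ T i}, π j ∉ coalWin A i (SafeObj (T i)) := by
  constructor
  · rintro ⟨σ, hNE, hout⟩ i hex j hj hwin
    exact NEAux.right_main A i (T i) π hπ σ hout (fun τ => hNE i τ) hex j hj hwin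
  · intro H
    refine ⟨fun _ => NEAux.eqStrat A T π hπ, ?_, funext (NEAux.eqStrat_outcome A T π hπ)⟩
    intro i τ hdev
    have h1 : outcome A (fun _ => NEAux.eqStrat A T π hπ) (π 0) = π :=
      funext (NEAux.eqStrat_outcome A T π hπ)
    rw [h1]
    exact NEAux.left_main A T π hπ H i τ _ rfl hdev
end
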